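/- The main series S₀ = Σ_{w∈B} Γ_b(w)·ξ(w) ∈ ℝ⟨⟨A⟩⟩ has zero constant term and satisfies the algebraic equation S₀ = b − a·exp⧢(2S₀)·c, where the products with the letters a and c are concatenation products. -/

import Mathlib

/-! STATEMENT 1: the main series `S₀ = Σ_{w∈B} Γ_b(w)·ξ(w)` has zero constant
term and satisfies `S₀ = b − a·exp⧢(2S₀)·c`. -/

/-! STATEMENT 0: Existence and uniqueness of the noncommutative power series
`S = b − a·exp⧢(2S)·c` with zero constant term. -/

/-- The three-letter alphabet `A = {a, b, c}`. -/
inductive Letter : Type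
  | a | b | c
deriving DecidableEq

/-- Words on the alphabet. -/
abbrev Word := List Letter

/-- Noncommutative power series over `ℝ` on the alphabet: a real coefficient
for every word. -/
abbrev Series := Word → ℝ

/-- The series associated to a single word (coefficient `1` on that word, `0` elsewhere). -/
def ofWord (v : Word) : Series := fun w => if w = v then 1 else 0

/-- Concatenation product of series: `⟨PQ, w⟩ = Σ_{uv = w} ⟨P,u⟩⟨Q,v⟩`. -/
noncomputable def cmul (P Q : Series) : Series :=
  fun w => ∑ i ∈ Finset.range (w.length + 1), P (w.take i) * Q (w.drop i)

/-- The subword of `w` selected by a boolean mask. -/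
def select (w : Word) (m : List Bool) : Word :=
  ((w.zip m).filter (fun p => p.2)).map Prod.fst

/-- The (bilinear) shuffle product of two series: the coefficient on `w` is the sum,
over all splittings of the positions of `w` into two complementary subsets, of the
product of the coefficients of the two selected subwords.  This is the bilinear
product determined on words by `ε⧢w = w⧢ε = w` and
`(w₁a₁)⧢(w₂a₂) = (w₁⧢(w₂a₂))a₁ + ((w₁a₁)⧢w₂)a₂`. -/
noncomputable def shuffle (P Q : Series) : Series := fun w =>
  ∑ m : Fin w.length → Bool,
    P (select w (List.ofFn m)) * Q (select w (List.ofFn (fun i => ! m i)))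

/-- Shuffle powers `P^{⧢k}`. -/
noncomputable def shufPow (P : Series) : ℕ → Series
  | 0 => ofWord []
  | k + 1 => shuffle (shufPow P k) P

/-- The shuffle exponential `exp⧢(P) = ε + Σ_{k≥1} P^{⧢k}/k!` (for `P` with zero
constant term only finitely many terms contribute to each coefficient). -/
noncomputable def shufExp (P : Series) : Series :=
  fun w => ∑' k : ℕ, ((k.factorial : ℝ))⁻¹ * shufPow P k w

/-! ### The ordered families of words `B_n`, `C_n` together with the map `ξ`

Each level is built as a *sorted list* (increasing with respect to the total
order of the construction), whose entries are pairs `(w, ξ(w))` of a word and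
the associated series `ξ(w)`; across levels, words of higher level (longer
words) are *smaller*.  The `C`-levels are produced by a single table-building
recursion. -/

/-- Table of the levels `C_1, …, C_n` (entry `i` of the table is the sorted
list of pairs `(w, ξ(w))` for `w ∈ C_i`; entry `0` is empty).

* `C_1 = {c}` with `ξ(c) = c`.
* For `m = 2k` even, `C_m = ⋃_{i=1}^{k} B_i C_{m−i}` ordered lexicographically
  (`vw < v′w′` iff `v < v′`, or `v = v′` and `w < w′`, where longer `v`'s are
  smaller, i.e. the blocks appear for `i = k, k−1, …, 1`); for `v = b ∈ B_1`,
  `ξ(bw) = b·ξ(w)`, and for `v = av′ ∈ B_i` with `v′ ∈ C_{i−1}` (`i ≥ 2`),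
  `ξ((av′)w) = a·(ξ(v′) ⧢ ξ(w))` (there `v′ > w` always, so `⊔′` is `⧢`).
* For `m = 2k+1` odd, additionally the block `D_k = {avw : v, w ∈ C_k, v ≥ w}`
  is prepended (its elements are smaller), ordered lexicographically in `(v,w)`,
  with `ξ(avw) = a·(ξ(v) ⊔′ ξ(w))`, where `ξ(v) ⊔′ ξ(w) = ξ(v) ⧢ ξ(w)` if
  `v > w` and `(1/2)·ξ(v) ⧢ ξ(v)` if `v = w`. -/
noncomputable def CPlevels : ℕ → List (List (Word × Series))
  | 0 => [[]]
  | n + 1 =>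
    let t := CPlevels n
    let C : ℕ → List (Word × Series) := fun i => t.getD i []
    let m := n + 1
    let k := m / 2
    let prods : List (Word × Series) :=
      (List.range k).flatMap (fun j =>
        let i := k - j
        if i = 1 then
          (C (m - 1)).map (fun q => (Letter.b :: q.1, cmul (ofWord [Letter.b]) q.2))
        else
          (C (i - 1)).flatMap (fun p =>
            (C (m - i)).map (fun q =>
              (Letter.a :: (p.1 ++ q.1),
                cmul (ofWord [Letter.a]) (shuffle p.2 q.2)))))
    let Ck := C k
    let Dk : List (Word × Series) :=
      (List.range Ck.length).flatMap (fun r =>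
        let p := Ck.getD r ([], 0)
        (List.range (r + 1)).map (fun s =>
          let q := Ck.getD s ([], 0)
          (Letter.a :: (p.1 ++ q.1),
            cmul (ofWord [Letter.a])
              (if s = r then (2 : ℝ)⁻¹ • shuffle p.2 p.2 else shuffle p.2 q.2))))
    let Cm : List (Word × Series) :=
      if m = 1 then [([Letter.c], ofWord [Letter.c])]
      else if m % 2 = 0 then prods
      else Dk ++ prods
    t ++ [Cm]

/-- The level `C_n`, as the sorted (increasing) list of pairs `(w, ξ(w))`, `w ∈ C_n`. -/
noncomputable def CP (n : ℕ) : List (Word × Series) := (CPlevels n).getD n []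

/-- The level `B_n`, as the sorted (increasing) list of pairs `(w, ξ(w))`, `w ∈ B_n`:
`B_1 = {b}` with `ξ(b) = b`, and `B_n = aC_{n−1}` (order inherited) with
`ξ(av) = a·ξ(v)`. -/
noncomputable def BP : ℕ → List (Word × Series)
  | 0 => []
  | 1 => [([Letter.b], ofWord [Letter.b])]
  | n + 2 => (CP (n + 1)).map (fun p => (Letter.a :: p.1, cmul (ofWord [Letter.a]) p.2))

/-- `Γ_b : B → ℤ`: `Γ_b(b) = 1` and `Γ_b(aw) = −(−2)^{|w|_a}·2^{|w|_b}`. -/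
def gammaB : Word → ℤ
  | [Letter.b] => 1
  | Letter.a :: w => -((-2 : ℤ) ^ (w.count Letter.a) * (2 : ℤ) ^ (w.count Letter.b))
  | _ => 0

/-- The main series `S₀ = Σ_{w ∈ B} Γ_b(w)·ξ(w) = Σ_n Σ_{w ∈ B_n} Γ_b(w)·ξ(w)`
(coefficientwise a finite sum, since `ξ(w)` for `w ∈ B_n` is supported on words
of length `n` and each `B_n` is finite). -/
noncomputable def mainSeries : Series :=
  fun u => ∑' n : ℕ, ((BP n).map (fun p => (gammaB p.1 : ℝ) * p.2 u)).sum

/-!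
With `μ(w) = (−2)^{|w|_a} 2^{|w|_b}` one has `Γ_b(aw) = −μ(w)`, so `S₀ = b − aT` for
`T = Σ_{w ∈ C} μ(w) ξ(w)`. Splitting `C_{n+1}` into its blocks `b C_n`, `a C_{i−1} C_{n+1−i}`
and `D_k`, the construction of the levels becomes the quadratic equation `T = c + 2bT − a (T ⧢ T)`.
Any solution of this equation satisfies `exp⧢(2(b − aT))·c = T`, as one sees by comparing left
derivatives `x⁻¹P = Σ_w ⟨P, xw⟩ w`, which obey the Leibniz rule for `⧢`.
-/

lemma sum_range_eq_two_nsmul_add_of_symm {M : Type*} [AddCommMonoid M] (f : ℕ → M) (N : ℕ)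
    (hf : ∀ j < N, f (N - 1 - j) = f j) :
    ∑ j ∈ Finset.range N, f j
      = 2 • ∑ j ∈ Finset.range (N / 2), f j + if N % 2 = 1 then f (N / 2) else 0 := by
  obtain ⟨q, rfl | rfl⟩ := Nat.even_or_odd' N
  · have hrefl : ∑ j ∈ Finset.range q, f (q + j) = ∑ j ∈ Finset.range q, f j := by
      rw [← Finset.sum_range_reflect]
      exact Finset.sum_congr rfl fun j hj => by
        rw [← hf j (by simp at hj; omega)]; congr 1; simp at hj; omega
    rw [two_mul, Finset.sum_range_add, hrefl, show (q + q) / 2 = q by omega,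
      if_neg (by omega), add_zero, two_nsmul]
  · have hrefl : ∑ j ∈ Finset.range q, f (q + (j + 1)) = ∑ j ∈ Finset.range q, f j := by
      rw [← Finset.sum_range_reflect]
      exact Finset.sum_congr rfl fun j hj => by
        rw [← hf j (by simp at hj; omega)]; congr 1; simp at hj; omega
    rw [show 2 * q + 1 = q + (q + 1) by ring, Finset.sum_range_add, Finset.sum_range_succ',
      hrefl, show (q + (q + 1)) / 2 = q by omega, if_pos (by omega), two_nsmul, add_zero]
    abel

lemma sum_range_sum_range_of_symm {M : Type*} [AddCommMonoid M] (G : ℕ → ℕ → M)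
    (hG : ∀ r s, G r s = G s r) (N : ℕ) :
    ∑ r ∈ Finset.range N, ∑ s ∈ Finset.range N, G r s
      = ∑ r ∈ Finset.range N, (G r r + 2 • ∑ s ∈ Finset.range r, G r s) := by
  induction N with
  | zero => simp
  | succ N ih =>
    simp only [Finset.sum_range_succ, Finset.sum_add_distrib, ih, two_nsmul]
    simp only [hG _ N]
    abel

@[simp] lemma select_nil (m : List Bool) : select [] m = [] := by
  simp [select]

@[simp] lemma select_cons (x : Letter) (w : Word) (b : Bool) (m : List Bool) :
    select (x :: w) (b :: m) = if b then x :: select w m else select w m := by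
  cases b <;> simp [select]

lemma length_select_add_length_select_not (w : Word) (m : List Bool)
    (h : m.length = w.length) :
    (select w m).length + (select w (m.map (! ·))).length = w.length := by
  induction w generalizing m with
  | nil => simp
  | cons x w ih =>
    obtain _ | ⟨b, m⟩ := m
    · simp at h
    · have := ih m (by simpa using h)
      cases b <;> simp <;> omega

lemma length_select_ofFn_add (w : Word) (m : Fin w.length → Bool) :
    (select w (List.ofFn m)).length + (select w (List.ofFn fun i => !m i)).length
      = w.length := by
  simpa [List.map_ofFn, Function.comp_def] using
    length_select_add_length_select_not w (List.ofFn m) (by simp)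

def der (x : Letter) (P : Series) : Series := fun w => P (x :: w)

def rder (x : Letter) (P : Series) : Series := fun w => P (w ++ [x])

section Shuffle

variable (P Q R : Series)

@[simp] lemma shuffle_apply_nil : shuffle P Q [] = P [] * Q [] := by
  simp [shuffle, select]

lemma shuffle_apply_cons (x : Letter) (w : Word) :
    shuffle P Q (x :: w) = shuffle (der x P) Q w + shuffle P (der x Q) w := by
  let e : Bool × (Fin w.length → Bool) ≃ (Fin (x :: w).length → Bool) :=
    Fin.consEquiv fun _ => Bool
  rw [shuffle, ← e.sum_comp, Fintype.sum_prod_type, Fintype.sum_bool]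
  simp [e, List.ofFn_succ, shuffle, der]

lemma der_shuffle (x : Letter) :
    der x (shuffle P Q) = shuffle (der x P) Q + shuffle P (der x Q) :=
  funext (shuffle_apply_cons P Q x)

lemma shuffle_comm : shuffle P Q = shuffle Q P := by
  funext w
  have hinv : Function.Involutive fun (m : Fin w.length → Bool) i => !m i :=
    fun m => funext fun i => Bool.not_not (m i)
  rw [shuffle, ← Equiv.sum_comp hinv.toPerm]
  simp [shuffle, mul_comm]

lemma shuffle_add_left : shuffle (P + Q) R = shuffle P R + shuffle Q R := by
  funext w; simp [shuffle, add_mul, Finset.sum_add_distrib]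

lemma shuffle_add_right : shuffle P (Q + R) = shuffle P Q + shuffle P R := by
  rw [shuffle_comm, shuffle_add_left, shuffle_comm Q, shuffle_comm R]

lemma shuffle_smul_left (c : ℝ) : shuffle (c • P) Q = c • shuffle P Q := by
  funext w; simp [shuffle, Finset.mul_sum, mul_assoc]

lemma shuffle_smul_right (c : ℝ) : shuffle P (c • Q) = c • shuffle P Q := by
  rw [shuffle_comm, shuffle_smul_left, shuffle_comm]

@[simp] lemma shuffle_zero_left : shuffle 0 Q = 0 := by
  funext w; simp [shuffle]

@[simp] lemma shuffle_zero_right : shuffle P 0 = 0 := by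
  rw [shuffle_comm, shuffle_zero_left]

lemma shuffle_sum_left {ι : Type*} (s : Finset ι) (f : ι → Series) :
    shuffle (∑ i ∈ s, f i) Q = ∑ i ∈ s, shuffle (f i) Q := by
  funext w
  simp only [shuffle, Finset.sum_apply, Finset.sum_mul]
  rw [Finset.sum_comm]

lemma shuffle_sum_right {ι : Type*} (s : Finset ι) (f : ι → Series) :
    shuffle P (∑ i ∈ s, f i) = ∑ i ∈ s, shuffle P (f i) := by
  rw [shuffle_comm, shuffle_sum_left]
  simp only [shuffle_comm _ P]

@[simp] lemma der_ofWord_nil (x : Letter) : der x (ofWord []) = 0 := by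
  funext w; simp [der, ofWord]

@[simp] lemma ofWord_nil_shuffle : shuffle (ofWord []) Q = Q := by
  funext w
  induction w generalizing Q with
  | nil => simp [ofWord]
  | cons x w ih => simp [shuffle_apply_cons, ih, der]

@[simp] lemma shuffle_ofWord_nil : shuffle P (ofWord []) = P := by
  rw [shuffle_comm, ofWord_nil_shuffle]

lemma shuffle_assoc : shuffle (shuffle P Q) R = shuffle P (shuffle Q R) := by
  funext w
  induction w generalizing P Q R with
  | nil => simp [mul_assoc]
  | cons x w ih =>
    simp only [shuffle_apply_cons, der_shuffle, shuffle_add_left, shuffle_add_right,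
      Pi.add_apply, ih]
    ring

lemma shuffle_apply_append_singleton (x : Letter) (w : Word) :
    shuffle P Q (w ++ [x]) = shuffle (rder x P) Q w + shuffle P (rder x Q) w := by
  induction w generalizing P Q with
  | nil => simp [shuffle_apply_cons, der, rder]
  | cons y w ih =>
    have hcomm : ∀ S : Series, rder x (der y S) = der y (rder x S) := fun _ => rfl
    simp only [List.cons_append, shuffle_apply_cons, ih, hcomm]
    ring

lemma shuffle_congr {P' Q' : Series} (w : Word)
    (hP : ∀ u : Word, u.length ≤ w.length → P u = P' u)
    (hQ : ∀ u : Word, u.length ≤ w.length → Q u = Q' u) :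
    shuffle P Q w = shuffle P' Q' w := by
  refine Finset.sum_congr rfl fun m _ => ?_
  have := length_select_ofFn_add w m
  rw [hP _ (by omega), hQ _ (by omega)]

end Shuffle

section Concatenation

variable (P Q R : Series)

@[simp] lemma cmul_apply_nil : cmul P Q [] = P [] * Q [] := by
  simp [cmul]

lemma cmul_apply_cons (x : Letter) (w : Word) :
    cmul P Q (x :: w) = cmul (der x P) Q w + P [] * Q (x :: w) := by
  rw [cmul, List.length_cons, Finset.sum_range_succ']
  simp [der, cmul]

lemma cmul_add_left : cmul (P + Q) R = cmul P R + cmul Q R := by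
  funext w; simp [cmul, add_mul, Finset.sum_add_distrib]

lemma cmul_add_right : cmul P (Q + R) = cmul P Q + cmul P R := by
  funext w; simp [cmul, mul_add, Finset.sum_add_distrib]

lemma cmul_smul_left (c : ℝ) : cmul (c • P) Q = c • cmul P Q := by
  funext w; simp [cmul, Finset.mul_sum, mul_assoc]

lemma cmul_smul_right (c : ℝ) : cmul P (c • Q) = c • cmul P Q := by
  funext w; simp [cmul, Finset.mul_sum, mul_left_comm]

@[simp] lemma cmul_zero_left : cmul 0 Q = 0 := by
  funext w; simp [cmul]

@[simp] lemma cmul_zero_right : cmul P 0 = 0 := by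
  funext w; simp [cmul]

lemma cmul_sum_right {ι : Type*} (s : Finset ι) (f : ι → Series) :
    cmul P (∑ i ∈ s, f i) = ∑ i ∈ s, cmul P (f i) := by
  funext w
  simp only [cmul, Finset.sum_apply, Finset.mul_sum]
  rw [Finset.sum_comm]

@[simp] lemma ofWord_nil_cmul : cmul (ofWord []) Q = Q := by
  funext w
  cases w with
  | nil => simp [ofWord]
  | cons x w => simp [ofWord, cmul]

lemma ofWord_singleton_cmul_apply_cons (x y : Letter) (w : Word) :
    cmul (ofWord [x]) Q (y :: w) = if y = x then Q w else 0 := by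
  have hder : der y (ofWord [x]) = if y = x then ofWord [] else 0 := by
    funext v
    by_cases h : y = x <;> simp [der, ofWord, h]
  rw [cmul_apply_cons, hder]
  split_ifs <;> simp [ofWord]

@[simp] lemma ofWord_singleton_cmul_apply_nil (x : Letter) : cmul (ofWord [x]) Q [] = 0 := by
  simp [ofWord]

lemma cmul_ofWord_singleton_apply_append_singleton (x y : Letter) (w : Word) :
    cmul P (ofWord [y]) (w ++ [x]) = if x = y then P w else 0 := by
  induction w generalizing P with
  | nil => by_cases h : x = y <;> simp [cmul_apply_cons, ofWord, h]
  | cons z w ih => simp [cmul_apply_cons, ih, ofWord, der]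

lemma rder_cmul_ofWord_singleton (x y : Letter) :
    rder x (cmul P (ofWord [y])) = if x = y then P else 0 := by
  funext w
  rw [rder, cmul_ofWord_singleton_apply_append_singleton]
  split_ifs <;> rfl

lemma cmul_congr_left {P' : Series} (w : Word)
    (hP : ∀ u : Word, u.length ≤ w.length → P u = P' u) :
    cmul P Q w = cmul P' Q w :=
  Finset.sum_congr rfl fun i _ => by rw [hP _ (by simp)]

/-- The last letter of a shuffle comes from one of the two factors. -/
lemma shuffle_cmul_ofWord_singleton (x : Letter) :
    shuffle (cmul P (ofWord [x])) (cmul Q (ofWord [x]))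
      = cmul (shuffle (cmul P (ofWord [x])) Q + shuffle P (cmul Q (ofWord [x]))) (ofWord [x]) := by
  funext u
  rcases List.eq_nil_or_concat u with rfl | ⟨w, y, rfl⟩
  · simp [ofWord]
  · rw [List.concat_eq_append, shuffle_apply_append_singleton,
      cmul_ofWord_singleton_apply_append_singleton, rder_cmul_ofWord_singleton,
      rder_cmul_ofWord_singleton]
    split_ifs <;> simp [add_comm]

lemma shuffle_cmul_ofWord_singleton_self (x : Letter) :
    shuffle (cmul P (ofWord [x])) (cmul P (ofWord [x]))
      = (2 : ℝ) • cmul (shuffle (cmul P (ofWord [x])) P) (ofWord [x]) := by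
  rw [shuffle_cmul_ofWord_singleton, shuffle_comm P, two_smul, cmul_add_left]

end Concatenation

section ShuffleExponential

variable {P : Series}

lemma shufPow_apply_of_length_lt (hP : P [] = 0) {k : ℕ} {w : Word} (hw : w.length < k) :
    shufPow P k w = 0 := by
  induction k generalizing w with
  | zero => omega
  | succ k ih =>
    refine Finset.sum_eq_zero fun m _ => ?_
    have := length_select_ofFn_add w m
    by_cases h : (select w (List.ofFn fun i => !m i)).length = 0
    · rw [List.length_eq_zero_iff.1 h, hP, mul_zero]
    · rw [ih (by omega), zero_mul]

lemma shufExp_apply_eq_sum (hP : P [] = 0) {w : Word} {n : ℕ} (hn : w.length < n) :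
    shufExp P w = ∑ k ∈ Finset.range n, ((k.factorial : ℝ))⁻¹ * shufPow P k w :=
  tsum_eq_sum fun k hk => by
    rw [shufPow_apply_of_length_lt hP (by simp at hk; omega), mul_zero]

lemma shufExp_apply_nil (hP : P [] = 0) : shufExp P [] = 1 := by
  simp [shufExp_apply_eq_sum hP (w := []) (n := 1) (by simp), shufPow, ofWord]

lemma der_shufPow_succ (x : Letter) (k : ℕ) :
    der x (shufPow P (k + 1)) = ((k : ℝ) + 1) • shuffle (der x P) (shufPow P k) := by
  induction k with
  | zero => simp [shufPow]
  | succ k ih =>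
    rw [shufPow, der_shuffle, ih, shuffle_smul_left, shuffle_assoc, ← shufPow,
      shuffle_comm (shufPow P (k + 1))]
    push_cast
    module

lemma der_shufExp (hP : P [] = 0) (x : Letter) :
    der x (shufExp P) = shuffle (der x P) (shufExp P) := by
  funext w
  set E : Series :=
    ∑ k ∈ Finset.range (w.length + 1), ((k.factorial : ℝ))⁻¹ • shufPow P k
  have hE : shuffle (der x P) (shufExp P) w = shuffle (der x P) E w :=
    shuffle_congr _ _ w (fun _ _ => rfl) fun u hu => by
      simp [E, shufExp_apply_eq_sum hP (w := u) (n := w.length + 1) (by omega)]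
  have hterm (k : ℕ) : ((k + 1).factorial : ℝ)⁻¹ * shufPow P (k + 1) (x :: w)
      = shuffle (der x P) (((k.factorial : ℝ))⁻¹ • shufPow P k) w := by
    change _ * der x (shufPow P (k + 1)) w = _
    rw [shuffle_smul_right, der_shufPow_succ, Nat.factorial_succ]
    simp only [Pi.smul_apply, smul_eq_mul, Nat.cast_mul, Nat.cast_succ]
    field_simp
  rw [hE, shuffle_sum_right, Finset.sum_apply, der,
    shufExp_apply_eq_sum hP (n := w.length + 2) (by simp), Finset.sum_range_succ']
  simp only [hterm]
  simp [shufPow, ofWord]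

lemma cmul_shufExp_apply_cons (hP : P [] = 0) (Q : Series) (x : Letter) (w : Word) :
    cmul (shufExp P) Q (x :: w) = cmul (shuffle (der x P) (shufExp P)) Q w + Q (x :: w) := by
  rw [cmul_apply_cons, der_shufExp hP, shufExp_apply_nil hP, one_mul]

end ShuffleExponential

/-- Both sides vanish on `ε`, and their left derivatives agree by induction on the length:
`x⁻¹ exp⧢(2S) = 2 (x⁻¹S) ⧢ exp⧢(2S)` makes the `a`-derivative of the left side
`−2 (T ⧢ exp⧢(2S))·c`, which matches `a⁻¹T = −T ⧢ T` because `(Pc) ⧢ (Pc) = 2 ((Pc) ⧢ P)·c`. -/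
theorem cmul_shufExp_eq_of_eq {T : Series}
    (hT : T = ofWord [Letter.c] + (2 : ℝ) • cmul (ofWord [Letter.b]) T
      - cmul (ofWord [Letter.a]) (shuffle T T)) :
    cmul (shufExp ((2 : ℝ) • (ofWord [Letter.b] - cmul (ofWord [Letter.a]) T)))
      (ofWord [Letter.c]) = T := by
  set S := ofWord [Letter.b] - cmul (ofWord [Letter.a]) T
  set E := shufExp ((2 : ℝ) • S)
  set X := cmul E (ofWord [Letter.c])
  have hS : ((2 : ℝ) • S) [] = 0 := by simp [S, ofWord]
  have hX (x : Letter) (w : Word) : X (x :: w) =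
      2 * cmul (shuffle (der x S) E) (ofWord [Letter.c]) w + ofWord [Letter.c] (x :: w) := by
    have h := cmul_shufExp_apply_cons hS (ofWord [Letter.c]) x w
    rwa [show der x ((2 : ℝ) • S) = (2 : ℝ) • der x S from rfl, shuffle_smul_left,
      cmul_smul_left] at h
  have hTcons (x : Letter) (w : Word) : T (x :: w) = ofWord [Letter.c] (x :: w)
      + 2 * (if x = Letter.b then T w else 0)
      - (if x = Letter.a then shuffle T T w else 0) := by
    conv_lhs => rw [hT]
    simp [ofWord_singleton_cmul_apply_cons]
  have hnil : X [] = T [] := by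
    rw [hT]
    simp [X, ofWord]
  suffices ∀ n (w : Word), w.length ≤ n → X w = T w from funext fun w => this _ w le_rfl
  intro n
  induction n with
  | zero => intro w hw; rwa [List.length_eq_zero_iff.1 (Nat.le_zero.1 hw)]
  | succ n ih =>
    rintro (_ | ⟨x, w⟩) hw
    · exact hnil
    have ih' (v : Word) (hv : v.length ≤ w.length) : X v = T v :=
      ih v (by simp at hw; omega)
    rw [hX, hTcons]
    cases x with
    | a =>
      have hSa : der Letter.a S = -T := by
        funext v; simp [S, der, ofWord, ofWord_singleton_cmul_apply_cons]
      have hTT : shuffle T T w = 2 * cmul (shuffle T E) (ofWord [Letter.c]) w :=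
        calc shuffle T T w
            = shuffle X X w :=
              shuffle_congr _ _ w (fun v hv => (ih' v hv).symm) fun v hv => (ih' v hv).symm
          _ = 2 * cmul (shuffle X E) (ofWord [Letter.c]) w := by
              rw [shuffle_cmul_ofWord_singleton_self]; rfl
          _ = 2 * cmul (shuffle T E) (ofWord [Letter.c]) w :=
              congrArg (2 * ·) <| cmul_congr_left _ _ w fun v hv =>
                shuffle_congr _ _ v (fun u hu => ih' u (hu.trans hv)) fun _ _ => rfl
      rw [hSa, hTT, ← neg_one_smul ℝ T, shuffle_smul_left, cmul_smul_left]
      simp [ofWord]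
    | b =>
      have hSb : der Letter.b S = ofWord [] := by
        funext v; simp [S, der, ofWord, ofWord_singleton_cmul_apply_cons]
      simpa [hSb, ofWord] using ih' w le_rfl
    | c =>
      have hSc : der Letter.c S = 0 := by
        funext v; simp [S, der, ofWord, ofWord_singleton_cmul_apply_cons]
      simp [hSc]

section Levels

noncomputable def bBlock (L : List (Word × Series)) : List (Word × Series) :=
  L.map fun q => (Letter.b :: q.1, cmul (ofWord [Letter.b]) q.2)

noncomputable def aBlock (L L' : List (Word × Series)) : List (Word × Series) :=
  L.flatMap fun p => L'.map fun q =>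
    (Letter.a :: (p.1 ++ q.1), cmul (ofWord [Letter.a]) (shuffle p.2 q.2))

/-- The block `D_k` built from the level `L = C_k`. -/
noncomputable def diagBlock (L : List (Word × Series)) : List (Word × Series) :=
  (List.range L.length).flatMap fun r => (List.range (r + 1)).map fun s =>
    (Letter.a :: ((L.getD r ([], 0)).1 ++ (L.getD s ([], 0)).1),
      cmul (ofWord [Letter.a])
        (if s = r then (2 : ℝ)⁻¹ • shuffle (L.getD r ([], 0)).2 (L.getD r ([], 0)).2
          else shuffle (L.getD r ([], 0)).2 (L.getD s ([], 0)).2))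

/-- The blocks `B_i C_{m−i}`, `i = m/2, …, 1`, of `C_m`, where `B_1 C_{m−1} = b C_{m−1}` and
`B_i C_{m−i} = a C_{i−1} C_{m−i}` for `i ≥ 2`. -/
noncomputable def productsBlock (C : ℕ → List (Word × Series)) (m : ℕ) :
    List (Word × Series) :=
  (List.range (m / 2)).flatMap fun j =>
    if m / 2 - j = 1 then bBlock (C (m - 1))
    else aBlock (C (m / 2 - j - 1)) (C (m - (m / 2 - j)))

noncomputable def nextLevel (C : ℕ → List (Word × Series)) (m : ℕ) : List (Word × Series) :=
  if m = 1 then [([Letter.c], ofWord [Letter.c])]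
  else if m % 2 = 0 then productsBlock C m
  else diagBlock (C (m / 2)) ++ productsBlock C m

lemma CPlevels_succ (n : ℕ) :
    CPlevels (n + 1) = CPlevels n ++ [nextLevel (fun i => (CPlevels n).getD i []) (n + 1)] :=
  rfl

lemma length_CPlevels (n : ℕ) : (CPlevels n).length = n + 1 := by
  induction n with
  | zero => rfl
  | succ n ih => simp [CPlevels_succ, ih]

lemma CP_succ_eq_nextLevel_getD (n : ℕ) :
    CP (n + 1) = nextLevel (fun i => (CPlevels n).getD i []) (n + 1) := by
  rw [CP, CPlevels_succ, List.getD_append_right _ _ _ _ (by rw [length_CPlevels]),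
    length_CPlevels]
  simp

lemma getD_CPlevels {n i : ℕ} (h : i ≤ n) : (CPlevels n).getD i [] = CP i := by
  induction n with
  | zero => rw [Nat.le_zero.1 h]; rfl
  | succ n ih =>
    rcases h.lt_or_eq with h | rfl
    · rw [CPlevels_succ, List.getD_append _ _ _ _ (by rw [length_CPlevels]; omega),
        ih (by omega)]
    · rfl

lemma nextLevel_congr {C C' : ℕ → List (Word × Series)} {n : ℕ}
    (h : ∀ i ≤ n, C i = C' i) : nextLevel C (n + 1) = nextLevel C' (n + 1) := by
  have hprod : productsBlock C (n + 1) = productsBlock C' (n + 1) :=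
    List.flatMap_congr fun j hj => by
      have := List.mem_range.1 hj
      split_ifs
      · rw [h _ (by omega)]
      · rw [h _ (by omega), h _ (by omega)]
  unfold nextLevel
  split_ifs with h1
  · rfl
  · exact hprod
  · rw [hprod, h _ (by omega)]

lemma CP_succ (n : ℕ) : CP (n + 1) = nextLevel CP (n + 1) := by
  rw [CP_succ_eq_nextLevel_getD]
  exact nextLevel_congr fun i hi => getD_CPlevels hi

end Levels

section Homogeneous

def IsHomogeneous (X : Series) (n : ℕ) : Prop := ∀ u : Word, u.length ≠ n → X u = 0

lemma isHomogeneous_ofWord (v : Word) : IsHomogeneous (ofWord v) v.length := by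
  intro u hu
  simp [ofWord, show u ≠ v from fun h => hu (h ▸ rfl)]

variable {X Y : Series} {m n : ℕ}

lemma IsHomogeneous.smul (hX : IsHomogeneous X n) (c : ℝ) : IsHomogeneous (c • X) n :=
  fun u hu => by simp [hX u hu]

lemma IsHomogeneous.ofWord_singleton_cmul (hX : IsHomogeneous X n) (x : Letter) :
    IsHomogeneous (cmul (ofWord [x]) X) (n + 1) := by
  rintro (_ | ⟨y, w⟩) hu
  · exact ofWord_singleton_cmul_apply_nil X x
  · rw [ofWord_singleton_cmul_apply_cons, hX w (by simpa using hu), ite_self]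

lemma IsHomogeneous.shuffle (hX : IsHomogeneous X m) (hY : IsHomogeneous Y n) :
    IsHomogeneous (shuffle X Y) (m + n) := fun u hu =>
  Finset.sum_eq_zero fun k _ => by
    have := length_select_ofFn_add u k
    by_cases hm : (select u (List.ofFn k)).length = m
    · rw [hY _ (by omega), mul_zero]
    · rw [hX _ hm, zero_mul]

lemma IsHomogeneous.of_eq (hX : IsHomogeneous X m) (h : m = n) : IsHomogeneous X n := h ▸ hX

variable {L L' : List (Word × Series)}

lemma isHomogeneous_of_mem_bBlock (hL : ∀ q ∈ L, IsHomogeneous q.2 n) :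
    ∀ p ∈ bBlock L, IsHomogeneous p.2 (n + 1) := by
  simp only [bBlock, List.mem_map]
  rintro _ ⟨q, hq, rfl⟩
  exact (hL q hq).ofWord_singleton_cmul _

lemma isHomogeneous_of_mem_aBlock (hL : ∀ q ∈ L, IsHomogeneous q.2 m)
    (hL' : ∀ q ∈ L', IsHomogeneous q.2 n) :
    ∀ p ∈ aBlock L L', IsHomogeneous p.2 (m + n + 1) := by
  simp only [aBlock, List.mem_flatMap, List.mem_map]
  rintro _ ⟨p, hp, q, hq, rfl⟩
  exact ((hL p hp).shuffle (hL' q hq)).ofWord_singleton_cmul _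

lemma isHomogeneous_of_mem_diagBlock (hL : ∀ q ∈ L, IsHomogeneous q.2 n) :
    ∀ p ∈ diagBlock L, IsHomogeneous p.2 (n + n + 1) := by
  have hget (r : ℕ) (hr : r < L.length) : IsHomogeneous (L.getD r ([], 0)).2 n := by
    rw [List.getD_eq_getElem _ _ hr]
    exact hL _ (List.getElem_mem _)
  simp only [diagBlock, List.mem_flatMap, List.mem_map, List.mem_range]
  rintro _ ⟨r, hr, s, hs, rfl⟩
  split_ifs
  · exact (((hget r hr).shuffle (hget r hr)).smul _).ofWord_singleton_cmul _
  · exact ((hget r hr).shuffle (hget s (by omega))).ofWord_singleton_cmul _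

lemma isHomogeneous_of_mem_CP (m : ℕ) : ∀ p ∈ CP m, IsHomogeneous p.2 m := by
  induction m using Nat.strong_induction_on with
  | _ m ih =>
    obtain _ | n := m
    · simp [CP, CPlevels]
    have hprod : ∀ p ∈ productsBlock CP (n + 1), IsHomogeneous p.2 (n + 1) := by
      simp only [productsBlock, List.mem_flatMap, List.mem_range]
      rintro p ⟨j, hj, hp⟩
      split_ifs at hp
      · exact isHomogeneous_of_mem_bBlock (ih n (by omega)) p hp
      · exact (isHomogeneous_of_mem_aBlock (ih _ (by omega)) (ih _ (by omega)) p hp).of_eq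
          (by omega)
    rw [CP_succ, nextLevel]
    split_ifs with h1 h2
    · simpa [h1] using isHomogeneous_ofWord [Letter.c]
    · exact hprod
    · simp only [List.mem_append]
      rintro p (hp | hp)
      · exact (isHomogeneous_of_mem_diagBlock (ih _ (by omega)) p hp).of_eq (by omega)
      · exact hprod p hp

lemma isHomogeneous_of_mem_BP (n : ℕ) : ∀ p ∈ BP n, IsHomogeneous p.2 n := by
  match n with
  | 0 => simp [BP]
  | 1 => simpa [BP] using isHomogeneous_ofWord [Letter.b]
  | n + 2 =>
    simp only [BP, List.mem_map]
    rintro _ ⟨q, hq, rfl⟩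
    exact (isHomogeneous_of_mem_CP _ q hq).ofWord_singleton_cmul _

end Homogeneous

section WeightedSums

/-- `μ(w) = (−2)^{|w|_a} 2^{|w|_b}`, so that `Γ_b(aw) = −μ(w)`. -/
noncomputable def weight (w : Word) : ℝ := (-2) ^ w.count Letter.a * 2 ^ w.count Letter.b

lemma weight_cons_a (w : Word) : weight (Letter.a :: w) = -2 * weight w := by
  simp [weight, pow_succ]; ring

lemma weight_cons_b (w : Word) : weight (Letter.b :: w) = 2 * weight w := by
  simp [weight, pow_succ]; ring

lemma weight_append (v w : Word) : weight (v ++ w) = weight v * weight w := by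
  simp [weight, pow_add]; ring

noncomputable def weightedSum (L : List (Word × Series)) : Series :=
  (L.map fun p => weight p.1 • p.2).sum

@[simp] lemma weightedSum_nil : weightedSum [] = 0 := rfl

@[simp] lemma weightedSum_cons (p : Word × Series) (L : List (Word × Series)) :
    weightedSum (p :: L) = weight p.1 • p.2 + weightedSum L := by
  simp [weightedSum]

lemma weightedSum_append (L L' : List (Word × Series)) :
    weightedSum (L ++ L') = weightedSum L + weightedSum L' := by
  simp [weightedSum]

lemma weightedSum_flatMap_range (K : ℕ) (f : ℕ → List (Word × Series)) :
    weightedSum ((List.range K).flatMap f) = ∑ i ∈ Finset.range K, weightedSum (f i) := by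
  simp only [weightedSum, List.flatMap, List.map_flatten, List.sum_flatten, List.map_map]
  rfl

lemma weightedSum_map_range (K : ℕ) (g : ℕ → Word × Series) :
    weightedSum ((List.range K).map g) = ∑ s ∈ Finset.range K, weight (g s).1 • (g s).2 := by
  simp only [weightedSum, List.map_map]
  rfl

lemma weightedSum_eq_sum_range (L : List (Word × Series)) :
    weightedSum L = ∑ r ∈ Finset.range L.length,
      weight (L.getD r ([], 0)).1 • (L.getD r ([], 0)).2 := by
  induction L with
  | nil => simp
  | cons p L ih =>
    rw [weightedSum_cons, ih, List.length_cons, Finset.sum_range_succ']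
    simp [add_comm]

lemma IsHomogeneous.weightedSum {L : List (Word × Series)} {n : ℕ}
    (hL : ∀ p ∈ L, IsHomogeneous p.2 n) : IsHomogeneous (weightedSum L) n := by
  induction L with
  | nil => exact fun _ _ => rfl
  | cons p L ih =>
    intro u hu
    simp [hL p (by simp) u hu, ih (fun q hq => hL q (by simp [hq])) u hu]

lemma weightedSum_bBlock (L : List (Word × Series)) :
    weightedSum (bBlock L) = (2 : ℝ) • cmul (ofWord [Letter.b]) (weightedSum L) := by
  induction L with
  | nil => simp [bBlock]
  | cons q L ih =>
    simp only [bBlock, List.map_cons, weightedSum_cons] at ih ⊢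
    rw [ih, cmul_add_right, cmul_smul_right, weight_cons_b, smul_add, smul_smul]

lemma weightedSum_aBlock (L L' : List (Word × Series)) :
    weightedSum (aBlock L L')
      = (-2 : ℝ) • cmul (ofWord [Letter.a]) (shuffle (weightedSum L) (weightedSum L')) := by
  have hrow (p : Word × Series) : weightedSum (L'.map fun q => (Letter.a :: (p.1 ++ q.1),
      cmul (ofWord [Letter.a]) (shuffle p.2 q.2)))
      = (-2 * weight p.1) • cmul (ofWord [Letter.a]) (shuffle p.2 (weightedSum L')) := by
    induction L' with
    | nil => simp
    | cons q L' ih =>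
      simp only [List.map_cons, weightedSum_cons, ih, shuffle_add_right, cmul_add_right,
        shuffle_smul_right, cmul_smul_right, weight_cons_a, weight_append, smul_add, smul_smul]
      ring_nf
  induction L with
  | nil => simp [aBlock]
  | cons p L ih =>
    simp only [aBlock, List.flatMap_cons, weightedSum_append] at ih ⊢
    rw [ih, hrow, weightedSum_cons, shuffle_add_left, shuffle_smul_left, cmul_add_right,
      cmul_smul_right, smul_add, smul_smul]

lemma weightedSum_diagBlock (L : List (Word × Series)) :
    weightedSum (diagBlock L)
      = -cmul (ofWord [Letter.a]) (shuffle (weightedSum L) (weightedSum L)) := by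
  set p : ℕ → Word × Series := fun r => L.getD r ([], 0)
  set G : ℕ → ℕ → Series := fun r s =>
    (weight (p r).1 * weight (p s).1) • cmul (ofWord [Letter.a]) (shuffle (p r).2 (p s).2)
  have hG : ∀ r s, G r s = G s r := fun r s => by simp only [G, shuffle_comm, mul_comm]
  have hrow (r : ℕ) : weightedSum ((List.range (r + 1)).map fun s =>
      (Letter.a :: ((p r).1 ++ (p s).1), cmul (ofWord [Letter.a])
        (if s = r then (2 : ℝ)⁻¹ • shuffle (p r).2 (p r).2 else shuffle (p r).2 (p s).2)))
      = -(G r r + 2 • ∑ s ∈ Finset.range r, G r s) := by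
    rw [weightedSum_map_range, Finset.sum_range_succ, add_comm, neg_add, Finset.smul_sum,
      ← Finset.sum_neg_distrib]
    congr 1
    · simp only [G, weight_cons_a, weight_append, if_pos, cmul_smul_right, smul_smul]
      module
    · refine Finset.sum_congr rfl fun s hs => ?_
      rw [if_neg (by simp at hs; omega), two_nsmul, ← two_smul ℝ]
      simp only [G, weight_cons_a, weight_append, smul_smul]
      module
  calc weightedSum (diagBlock L)
      = ∑ r ∈ Finset.range L.length, -(G r r + 2 • ∑ s ∈ Finset.range r, G r s) := by
        rw [diagBlock, weightedSum_flatMap_range]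
        exact Finset.sum_congr rfl fun r _ => hrow r
    _ = -∑ r ∈ Finset.range L.length, ∑ s ∈ Finset.range L.length, G r s := by
        rw [sum_range_sum_range_of_symm G hG, Finset.sum_neg_distrib]
    _ = -cmul (ofWord [Letter.a]) (shuffle (weightedSum L) (weightedSum L)) := by
        rw [weightedSum_eq_sum_range L, shuffle_sum_left, cmul_sum_right]
        congr 1
        refine Finset.sum_congr rfl fun r _ => ?_
        rw [shuffle_smul_left, shuffle_sum_right, cmul_smul_right, cmul_sum_right,
          Finset.smul_sum]
        refine Finset.sum_congr rfl fun s _ => ?_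
        rw [shuffle_smul_right, cmul_smul_right, smul_smul]

end WeightedSums

section LevelSums

noncomputable def levelSum (m : ℕ) : Series := weightedSum (CP m)

lemma isHomogeneous_levelSum (m : ℕ) : IsHomogeneous (levelSum m) m :=
  IsHomogeneous.weightedSum (isHomogeneous_of_mem_CP m)

@[simp] lemma levelSum_zero : levelSum 0 = 0 := rfl

lemma levelSum_one : levelSum 1 = ofWord [Letter.c] := by
  simp [levelSum, CP_succ 0, nextLevel, weight]

lemma weightedSum_productsBlock {n : ℕ} (hn : 1 ≤ n) :
    weightedSum (productsBlock CP (n + 1))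
      = (2 : ℝ) • cmul (ofWord [Letter.b]) (levelSum n)
        + ∑ t ∈ Finset.range ((n + 1) / 2 - 1),
          (-2 : ℝ) • cmul (ofWord [Letter.a])
            (shuffle (levelSum (t + 1)) (levelSum (n - 1 - t))) := by
  obtain ⟨k, hk⟩ : ∃ k, (n + 1) / 2 = k + 1 := ⟨(n + 1) / 2 - 1, by omega⟩
  rw [productsBlock, weightedSum_flatMap_range, ← Finset.sum_range_reflect, hk,
    Finset.sum_range_succ', add_comm]
  congr 1
  · rw [if_pos (by omega), weightedSum_bBlock]
    rfl
  · refine Finset.sum_congr rfl fun t ht => ?_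
    have ht := Finset.mem_range.1 ht
    rw [if_neg (by omega), weightedSum_aBlock,
      show k + 1 - (k + 1 - 1 - (t + 1)) - 1 = t + 1 by omega,
      show n + 1 - (k + 1 - (k + 1 - 1 - (t + 1))) = n - 1 - t by omega]
    rfl

/-- The block `D_k` supplies the diagonal term `T_k ⧢ T_k` of the sum when `n = 2k`; its
entries `avw` with `v > w` stand for both ordered pairs `(v, w)`, `(w, v)`, hence the factor
`1/2` on `ξ(v) ⧢ ξ(v)`. -/
lemma levelSum_succ {n : ℕ} (hn : 1 ≤ n) :
    levelSum (n + 1) = (2 : ℝ) • cmul (ofWord [Letter.b]) (levelSum n)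
      - cmul (ofWord [Letter.a])
          (∑ p ∈ Finset.range (n + 1), shuffle (levelSum p) (levelSum (n - p))) := by
  set f : ℕ → Series := fun p => shuffle (levelSum (p + 1)) (levelSum (n - 1 - p))
  have hfold := sum_range_eq_two_nsmul_add_of_symm f (n - 1) fun j hj => by
    simp only [f]
    rw [shuffle_comm, show n - 1 - 1 - j + 1 = n - 1 - j by omega,
      show n - 1 - (n - 1 - 1 - j) = j + 1 by omega]
  have hsum : ∑ p ∈ Finset.range (n + 1), shuffle (levelSum p) (levelSum (n - p))
      = ∑ t ∈ Finset.range (n - 1), f t := by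
    obtain ⟨m, rfl⟩ : ∃ m, n = m + 1 := ⟨n - 1, by omega⟩
    rw [Finset.sum_range_succ', Finset.sum_range_succ]
    simp [f]
  have hneg (X : Series) : (-2 : ℝ) • X = -(X + X) := by module
  rw [hsum, hfold, show (n - 1) / 2 = (n + 1) / 2 - 1 by omega, levelSum, CP_succ, nextLevel,
    if_neg (by omega)]
  split_ifs with h1 h2 h2 <;> try omega
  · rw [weightedSum_productsBlock hn, add_zero, two_nsmul, cmul_add_right, cmul_sum_right,
      ← Finset.sum_add_distrib]
    simp only [hneg, Finset.sum_neg_distrib]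
    abel
  · rw [weightedSum_append, weightedSum_diagBlock, weightedSum_productsBlock hn,
      two_nsmul, cmul_add_right, cmul_add_right, cmul_sum_right, ← Finset.sum_add_distrib]
    simp only [f, show (n + 1) / 2 - 1 + 1 = (n + 1) / 2 by omega,
      show n - 1 - ((n + 1) / 2 - 1) = (n + 1) / 2 by omega]
    change -cmul _ (shuffle (levelSum _) (levelSum _)) + _ = _
    simp only [hneg, Finset.sum_neg_distrib]
    abel

end LevelSums

noncomputable def cSeries : Series := fun u => levelSum u.length u

lemma cSeries_apply_eq_sum_levelSum {N : ℕ} {u : Word} (hu : u.length ≤ N) :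
    cSeries u = (∑ p ∈ Finset.range (N + 1), levelSum p) u := by
  rw [Finset.sum_apply, Finset.sum_eq_single u.length]
  · rfl
  · exact fun p _ hp => isHomogeneous_levelSum p u (Ne.symm hp)
  · simp; omega

lemma shuffle_cSeries_self_apply (w : Word) :
    shuffle cSeries cSeries w =
      ∑ p ∈ Finset.range (w.length + 1), shuffle (levelSum p) (levelSum (w.length - p)) w := by
  rw [shuffle_congr _ _ w (fun u hu => cSeries_apply_eq_sum_levelSum hu)
    (fun u hu => cSeries_apply_eq_sum_levelSum hu), shuffle_sum_left, Finset.sum_apply]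
  refine Finset.sum_congr rfl fun p hp => ?_
  rw [shuffle_sum_right, Finset.sum_apply, Finset.sum_eq_single (w.length - p)]
  · exact fun q _ hq => (isHomogeneous_levelSum p).shuffle (isHomogeneous_levelSum q) w
      (by simp at hp; omega)
  · simp

lemma cSeries_eq : cSeries = ofWord [Letter.c] + (2 : ℝ) • cmul (ofWord [Letter.b]) cSeries
    - cmul (ofWord [Letter.a]) (shuffle cSeries cSeries) := by
  funext u
  rcases u with _ | ⟨x, w⟩
  · simp [cSeries, ofWord]
  obtain hw | hw := Nat.eq_zero_or_pos w.length
  · rw [List.length_eq_zero_iff.1 hw]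
    simp [cSeries, levelSum_one, ofWord_singleton_cmul_apply_cons]
  · have hc : ofWord [Letter.c] (x :: w) = 0 := by simp [ofWord, List.ne_nil_of_length_pos hw]
    simp [cSeries, levelSum_succ hw, ofWord_singleton_cmul_apply_cons, hc,
      shuffle_cSeries_self_apply, Finset.sum_apply]

lemma sum_gammaB_BP_add_two (n : ℕ) (u : Word) :
    ((BP (n + 2)).map fun p => (gammaB p.1 : ℝ) * p.2 u).sum
      = -cmul (ofWord [Letter.a]) (levelSum (n + 1)) u := by
  have hγ (w : Word) : (gammaB (Letter.a :: w) : ℝ) = -weight w := by simp [gammaB, weight]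
  rw [BP, List.map_map, levelSum]
  induction CP (n + 1) with
  | nil => simp
  | cons q L ih =>
    simp [hγ, ih, cmul_add_right, cmul_smul_right]
    ring

lemma mainSeries_apply (u : Word) :
    mainSeries u = ((BP u.length).map fun p => (gammaB p.1 : ℝ) * p.2 u).sum :=
  tsum_eq_single u.length fun n hn => List.sum_eq_zero fun x hx => by
    obtain ⟨p, hp, rfl⟩ := List.mem_map.1 hx
    rw [isHomogeneous_of_mem_BP n p hp u (Ne.symm hn), mul_zero]

lemma mainSeries_eq : mainSeries = ofWord [Letter.b] - cmul (ofWord [Letter.a]) cSeries := by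
  funext u
  rw [mainSeries_apply]
  match u with
  | [] => simp [BP, ofWord]
  | [x] => simp [BP, gammaB, ofWord_singleton_cmul_apply_cons, cSeries]
  | x :: y :: w =>
    rw [List.length_cons, List.length_cons, sum_gammaB_BP_add_two]
    simp [ofWord, ofWord_singleton_cmul_apply_cons, cSeries]

/-- The main series has zero constant term and solves `S₀ = b − a·exp⧢(2S₀)·c`. -/
theorem mainSeries_solves :
    mainSeries [] = 0 ∧
    mainSeries = ofWord [Letter.b] -
        cmul (ofWord [Letter.a]) (cmul (shufExp ((2 : ℝ) • mainSeries)) (ofWord [Letter.c])) := by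
  rw [mainSeries_eq, cmul_shufExp_eq_of_eq cSeries_eq]
  simp [ofWord]
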